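/- Let G be a graph, (X, Y) a separation of G with G[X ∩ Y] connected such that both X \ Y and Y \ X are nonempty, and suppose bn(G[X]) ≤ b1 and bn(G[Y]) ≤ b2. Then bn(G) ≤ b1 + b2. -/

import Mathlib

variable {V : Type*} [Fintype V] [DecidableEq V]

/-- An F2-cycle relative to an edge set `E`: a finite set of edges, all belonging to `E`,
in which every vertex has even degree. -/
def IsF2CycleIn (E : Set (Sym2 V)) (C : Finset (Sym2 V)) : Prop :=
  (∀ e ∈ C, e ∈ E) ∧ ∀ v : V, Even ((C.filter (fun e => v ∈ e)).card)

/-- `B` generates the cycle space of the graph with edge set `E`: every F2-cycle is a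
symmetric difference of a subfamily of `B`. -/
def GeneratesIn (E : Set (Sym2 V)) (B : List (Finset (Sym2 V))) : Prop :=
  ∀ C : Finset (Sym2 V), IsF2CycleIn E C →
    ∃ l : List (Finset (Sym2 V)), l.Sublist B ∧ C = l.foldr symmDiff ∅

/-- The basis number of the graph with edge set `E`: the least `k` such that some
family of F2-cycles generating the cycle space uses each edge at most `k` times. -/
noncomputable def bnSet (E : Set (Sym2 V)) : ℕ :=
  sInf {k | ∃ B : List (Finset (Sym2 V)), (∀ X ∈ B, IsF2CycleIn E X) ∧
    GeneratesIn E B ∧ ∀ e : Sym2 V, B.countP (fun X => decide (e ∈ X)) ≤ k}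

/-- The basis number of a graph. -/
noncomputable def SimpleGraph.bn (G : SimpleGraph V) : ℕ := bnSet G.edgeSet
/-- The restriction `G[X]` of `G` to a vertex set `X`, kept on the same vertex type
(only edges with both endpoints in `X` remain). -/
def SimpleGraph.restrict (G : SimpleGraph V) (X : Set V) : SimpleGraph V where
  Adj u v := G.Adj u v ∧ u ∈ X ∧ v ∈ X
  symm := ⟨fun _ _ h => ⟨h.1.symm, h.2.2, h.2.1⟩⟩
  loopless := ⟨fun v h => G.loopless.irrefl v h.1⟩

/-!
Split an F2-cycle `C` of `G` as `C₁ ∆ C₂` with `C₁ ⊆ E(G[X])` and `C₂ ⊆ E(G[Y])`. Since `C` is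
even everywhere, `C₁` and `C₂` have the same odd-degree vertices `T`; these cannot lie outside
`X ∩ Y`, and there are evenly many of them. Connectivity of `G[X ∩ Y]` gives a `T`-join `J` inside
`G[X ∩ Y]`, so `C = (C₁ ∆ J) ∆ (C₂ ∆ J)` is a sum of a cycle of `G[X]` and a cycle of `G[Y]`.
Concatenating optimal generating families of `G[X]` and `G[Y]` therefore generates the cycle
space of `G`, and every edge is used at most `b₁ + b₂` times.
-/

open Finset
open scoped symmDiff

lemma ZMod.two_eq_ite (x : ZMod 2) : x = if x = 1 then 1 else 0 := by
  revert x
  decide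

lemma List.foldr_symmDiff_append {α : Type*} [DecidableEq α] (l₁ l₂ : List (Finset α)) :
    (l₁ ++ l₂).foldr symmDiff ∅ = l₁.foldr symmDiff ∅ ∆ l₂.foldr symmDiff ∅ := by
  induction l₁ with
  | nil => exact (bot_symmDiff _).symm
  | cons a l ih => simp [ih, symmDiff_assoc]

section
omit [Fintype V]

def degParity (C : Finset (Sym2 V)) (v : V) : ZMod 2 := #(C.filter (v ∈ ·))

lemma isF2CycleIn_iff {E : Set (Sym2 V)} {C : Finset (Sym2 V)} :
    IsF2CycleIn E C ↔ (C : Set (Sym2 V)) ⊆ E ∧ ∀ v, degParity C v = 0 := by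
  simp only [IsF2CycleIn, degParity, ZMod.natCast_eq_zero_iff_even]
  rfl

lemma IsF2CycleIn.mono {E E' : Set (Sym2 V)} {C : Finset (Sym2 V)} (h : E ⊆ E')
    (hC : IsF2CycleIn E C) : IsF2CycleIn E' C :=
  ⟨fun e he => h (hC.1 e he), hC.2⟩

lemma degParity_eq_zero_of_forall_notMem {C : Finset (Sym2 V)} {v : V} (h : ∀ e ∈ C, v ∉ e) :
    degParity C v = 0 := by
  simp [degParity, filter_false_of_mem h]

end

lemma degParity_eq_sum (C : Finset (Sym2 V)) (v : V) :
    degParity C v = ∑ e, if e ∈ C ∧ v ∈ e then 1 else 0 := by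
  rw [sum_boole, degParity]
  congr 2
  ext e
  simp

lemma degParity_symmDiff (A B : Finset (Sym2 V)) (v : V) :
    degParity (A ∆ B) v = degParity A v + degParity B v := by
  simp only [degParity_eq_sum, ← sum_add_distrib]
  refine sum_congr rfl fun e _ => ?_
  by_cases hA : e ∈ A <;> by_cases hB : e ∈ B <;> by_cases hv : v ∈ e <;>
    simp [mem_symmDiff, hA, hB, hv, CharTwo.add_self_eq_zero]

lemma even_card_degParity_eq_one {C : Finset (Sym2 V)} (hC : ∀ e ∈ C, ¬e.IsDiag) :
    Even #(univ.filter (degParity C · = 1)) := by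
  have hcount : ∑ v, #(C.filter (v ∈ ·)) = ∑ e ∈ C, 2 := by
    refine (sum_card_bipartiteAbove_eq_sum_card_bipartiteBelow (· ∈ ·)).trans
      (sum_congr rfl fun e he => ?_)
    rw [← Sym2.card_toFinset_of_not_isDiag e (hC e he)]
    congr 1
    ext v
    simp [bipartiteBelow]
  have hsum : ∑ v, degParity C v = 0 := by
    simp only [degParity, ← Nat.cast_sum, hcount, sum_const, smul_eq_mul, Nat.cast_mul]
    exact mul_eq_zero_of_right _ rfl
  rw [← ZMod.natCast_eq_zero_iff_even, ← hsum, ← sum_boole]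
  exact sum_congr rfl fun v _ => (ZMod.two_eq_ite _).symm

lemma isF2CycleIn_symmDiff {E : Set (Sym2 V)} {A J : Finset (Sym2 V)}
    (hA : (A : Set (Sym2 V)) ⊆ E) (hJ : (J : Set (Sym2 V)) ⊆ E)
    (hdeg : ∀ v, degParity J v = degParity A v) : IsF2CycleIn E (A ∆ J) := by
  refine isF2CycleIn_iff.2 ⟨(coe_subset.2 symmDiff_subset_union).trans ?_, fun v => ?_⟩
  · rw [coe_union]
    exact Set.union_subset hA hJ
  · rw [degParity_symmDiff, hdeg, CharTwo.add_self_eq_zero]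

lemma exists_generating_family_bnSet (E : Set (Sym2 V)) :
    ∃ B : List (Finset (Sym2 V)), (∀ X ∈ B, IsF2CycleIn E X) ∧ GeneratesIn E B ∧
      ∀ e : Sym2 V, B.countP (fun X => decide (e ∈ X)) ≤ bnSet E := by
  classical
  let cycles := (univ.filter (IsF2CycleIn E)).toList
  refine Nat.sInf_mem (s := {k | ∃ B : List (Finset (Sym2 V)), (∀ X ∈ B, IsF2CycleIn E X) ∧
    GeneratesIn E B ∧ ∀ e : Sym2 V, B.countP (fun X => decide (e ∈ X)) ≤ k})
    ⟨cycles.length, cycles, fun X hX => ?_, fun C hC => ?_, fun _ => List.countP_le_length⟩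
  · simpa [cycles] using hX
  · exact ⟨[C], List.singleton_sublist.2 (by simpa [cycles] using hC), (symmDiff_bot C).symm⟩

theorem bnSet_le_add {E E₁ E₂ : Set (Sym2 V)} (h₁ : E₁ ⊆ E) (h₂ : E₂ ⊆ E)
    (hsplit : ∀ C, IsF2CycleIn E C →
      ∃ A B, IsF2CycleIn E₁ A ∧ IsF2CycleIn E₂ B ∧ C = A ∆ B) :
    bnSet E ≤ bnSet E₁ + bnSet E₂ := by
  obtain ⟨B₁, hB₁, hgen₁, hcount₁⟩ := exists_generating_family_bnSet E₁
  obtain ⟨B₂, hB₂, hgen₂, hcount₂⟩ := exists_generating_family_bnSet E₂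
  refine Nat.sInf_le ⟨B₁ ++ B₂, fun Z hZ => ?_, fun C hC => ?_, fun e => ?_⟩
  · rcases List.mem_append.1 hZ with hZ | hZ
    exacts [(hB₁ Z hZ).mono h₁, (hB₂ Z hZ).mono h₂]
  · obtain ⟨A, B, hA, hB, rfl⟩ := hsplit C hC
    obtain ⟨l₁, hl₁, rfl⟩ := hgen₁ A hA
    obtain ⟨l₂, hl₂, rfl⟩ := hgen₂ B hB
    exact ⟨l₁ ++ l₂, hl₁.append hl₂, (List.foldr_symmDiff_append l₁ l₂).symm⟩
  · rw [List.countP_append]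
    exact add_le_add (hcount₁ e) (hcount₂ e)

namespace SimpleGraph

section
omit [Fintype V] [DecidableEq V]

lemma restrict_le (G : SimpleGraph V) (s : Set V) : G.restrict s ≤ G := fun _ _ h => h.1

lemma restrict_mono (G : SimpleGraph V) {s t : Set V} (h : s ⊆ t) :
    G.restrict s ≤ G.restrict t :=
  fun _ _ hadj => ⟨hadj.1, h hadj.2.1, h hadj.2.2⟩

lemma mem_of_mem_edgeSet_restrict {G : SimpleGraph V} {s : Set V} {e : Sym2 V}
    (he : e ∈ (G.restrict s).edgeSet) {v : V} (hv : v ∈ e) : v ∈ s := by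
  induction e with
  | _ a b => rcases Sym2.mem_iff.1 hv with rfl | rfl; exacts [he.2.1, he.2.2]

lemma edgeSet_subset_restrict_union {G : SimpleGraph V} {X Y : Set V} (hXY : X ∪ Y = Set.univ)
    (hsep : ∀ x ∈ X \ Y, ∀ y ∈ Y \ X, ¬ G.Adj x y) :
    G.edgeSet ⊆ (G.restrict X).edgeSet ∪ (G.restrict Y).edgeSet := by
  intro e
  induction e with
  | _ a b =>
    intro hab
    have ha : a ∈ X ∪ Y := hXY ▸ Set.mem_univ a
    have hb : b ∈ X ∪ Y := hXY ▸ Set.mem_univ b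
    have hsepa := hsep a
    have hsepb := hsep b
    simp only [Set.mem_union, mem_edgeSet, restrict, Set.mem_sdiff] at *
    tauto

lemma Preconnected.reachable_restrict {G : SimpleGraph V} {s : Set V}
    (h : (G.induce s).Preconnected) {a b : V} (ha : a ∈ s) (hb : b ∈ s) :
    (G.restrict s).Reachable a b :=
  let toRestrict : G.induce s →g G.restrict s := ⟨Subtype.val, fun {u v} hadj => ⟨hadj, u.2, v.2⟩⟩
  (h ⟨a, ha⟩ ⟨b, hb⟩).map toRestrict

end

section
omit [Fintype V]

lemma degParity_eq_zero_of_notMem_restrict {G : SimpleGraph V} {s : Set V}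
    {C : Finset (Sym2 V)} (hC : (C : Set (Sym2 V)) ⊆ (G.restrict s).edgeSet) {v : V}
    (hv : v ∉ s) : degParity C v = 0 :=
  degParity_eq_zero_of_forall_notMem fun _ he hve => hv (mem_of_mem_edgeSet_restrict (hC he) hve)

namespace Walk

variable {G : SimpleGraph V}

/-- The edges that `w` traverses an odd number of times. -/
def oddEdges {a b : V} (w : G.Walk a b) : Finset (Sym2 V) :=
  w.edges.foldr (fun e s => {e} ∆ s) ∅

lemma oddEdges_cons {a b c : V} (h : G.Adj a b) (w : G.Walk b c) :
    (cons h w).oddEdges = {s(a, b)} ∆ w.oddEdges := rfl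

lemma oddEdges_subset_edgeSet {a b : V} (w : G.Walk a b) :
    (w.oddEdges : Set (Sym2 V)) ⊆ G.edgeSet := by
  induction w with
  | nil => simp [oddEdges]
  | cons h w ih =>
    intro e he
    rw [mem_coe, oddEdges_cons, mem_symmDiff, mem_singleton] at he
    rcases he with ⟨rfl, _⟩ | ⟨he, _⟩
    exacts [h, ih he]

end Walk

end

lemma Walk.degParity_oddEdges {G : SimpleGraph V} {a b : V} (w : G.Walk a b) (v : V) :
    degParity w.oddEdges v = (if v = a then 1 else 0) + (if v = b then 1 else 0) := by
  induction w with
  | nil => simp [Walk.oddEdges, degParity, CharTwo.add_self_eq_zero]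
  | @cons a c b h w ih =>
    have hsingle : degParity {s(a, c)} v = (if v = a then 1 else 0) + (if v = c then 1 else 0) := by
      by_cases hva : v = a <;> by_cases hvc : v = c <;>
        simp [degParity, filter_singleton, h.ne, h.ne.symm, *]
    rw [Walk.oddEdges_cons, degParity_symmDiff, ih, hsingle, add_assoc, CharTwo.add_cancel_left]

lemma exists_degParity_eq_add_root (H : SimpleGraph V) {r : V} (T : Finset V)
    (hT : ∀ t ∈ T, H.Reachable t r) :
    ∃ J : Finset (Sym2 V), (J : Set (Sym2 V)) ⊆ H.edgeSet ∧
      ∀ v, degParity J v = (if v ∈ T then 1 else 0) + #T * (if v = r then 1 else 0) := by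
  induction T using Finset.induction_on with
  | empty => exact ⟨∅, by simp, fun v => by simp [degParity]⟩
  | @insert t T htT ih =>
    obtain ⟨J, hJ, hJdeg⟩ := ih fun x hx => hT x (mem_insert_of_mem hx)
    obtain ⟨w⟩ := hT t (mem_insert_self t T)
    refine ⟨w.oddEdges ∆ J, (coe_subset.2 symmDiff_subset_union).trans ?_, fun v => ?_⟩
    · rw [coe_union]
      exact Set.union_subset w.oddEdges_subset_edgeSet hJ
    · rw [degParity_symmDiff, Walk.degParity_oddEdges, hJdeg, card_insert_of_notMem htT]
      by_cases hvt : v = t <;> by_cases hvT : v ∈ T <;> by_cases hvr : v = r <;>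
        simp_all <;> ring

lemma exists_degParity_eq_indicator (H : SimpleGraph V) {T : Finset V}
    (hT : ∀ a ∈ T, ∀ b ∈ T, H.Reachable a b) (heven : Even #T) :
    ∃ J : Finset (Sym2 V), (J : Set (Sym2 V)) ⊆ H.edgeSet ∧
      ∀ v, degParity J v = if v ∈ T then 1 else 0 := by
  rcases T.eq_empty_or_nonempty with rfl | ⟨r, hr⟩
  · exact ⟨∅, by simp, fun v => by simp [degParity]⟩
  obtain ⟨J, hJ, hJdeg⟩ := exists_degParity_eq_add_root H T fun t ht => hT t ht r hr
  refine ⟨J, hJ, fun v => ?_⟩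
  rw [hJdeg, heven.natCast_zmod_two, zero_mul, add_zero]

theorem exists_isF2CycleIn_restrict_symmDiff {G : SimpleGraph V} {X Y : Set V}
    (hcover : G.edgeSet ⊆ (G.restrict X).edgeSet ∪ (G.restrict Y).edgeSet)
    (hconn : (G.induce (X ∩ Y)).Preconnected)
    {C : Finset (Sym2 V)} (hC : IsF2CycleIn G.edgeSet C) :
    ∃ A B, IsF2CycleIn (G.restrict X).edgeSet A ∧ IsF2CycleIn (G.restrict Y).edgeSet B ∧
      C = A ∆ B := by
  classical
  obtain ⟨hCE, hCdeg⟩ := isF2CycleIn_iff.1 hC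
  set C₁ := C.filter (· ∈ (G.restrict X).edgeSet)
  set C₂ := C \ C₁
  have hC₁ : (C₁ : Set (Sym2 V)) ⊆ (G.restrict X).edgeSet := fun e he => (mem_filter.1 he).2
  have hC₂ : (C₂ : Set (Sym2 V)) ⊆ (G.restrict Y).edgeSet := fun e he => by
    obtain ⟨heC, heC₁⟩ := mem_sdiff.1 he
    exact (hcover (hCE heC)).resolve_left fun h => heC₁ (mem_filter.2 ⟨heC, h⟩)
  have hsplit : C = C₁ ∆ C₂ := by
    rw [disjoint_sdiff.symmDiff_eq_sup, sup_eq_union, union_sdiff_of_subset (filter_subset _ _)]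
  have hpar : ∀ v, degParity C₁ v = degParity C₂ v := fun v => by
    rw [← CharTwo.add_eq_zero, ← degParity_symmDiff, ← hsplit, hCdeg v]
  set T := univ.filter (degParity C₁ · = 1)
  have hTXY : ∀ t ∈ T, t ∈ X ∩ Y := fun t ht => by
    have h1 : degParity C₁ t = 1 := (mem_filter.1 ht).2
    by_contra hXY
    rcases not_and_or.1 hXY with htX | htY
    · rw [degParity_eq_zero_of_notMem_restrict hC₁ htX] at h1
      exact zero_ne_one h1
    · rw [hpar, degParity_eq_zero_of_notMem_restrict hC₂ htY] at h1
      exact zero_ne_one h1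
  have heven : Even #T :=
    even_card_degParity_eq_one fun e he => (G.restrict X).not_isDiag_of_mem_edgeSet (hC₁ he)
  obtain ⟨J, hJ, hJdeg⟩ := exists_degParity_eq_indicator (G.restrict (X ∩ Y))
    (fun a ha b hb => hconn.reachable_restrict (hTXY a ha) (hTXY b hb)) heven
  have hJC₁ : ∀ v, degParity J v = degParity C₁ v := fun v => by
    rw [hJdeg, ZMod.two_eq_ite (degParity C₁ v)]
    simp [T]
  have hJX := hJ.trans (edgeSet_mono (G.restrict_mono Set.inter_subset_left))
  have hJY := hJ.trans (edgeSet_mono (G.restrict_mono Set.inter_subset_right))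
  refine ⟨C₁ ∆ J, C₂ ∆ J, isF2CycleIn_symmDiff hC₁ hJX hJC₁,
    isF2CycleIn_symmDiff hC₂ hJY fun v => (hJC₁ v).trans (hpar v), ?_⟩
  rw [symmDiff_symmDiff_symmDiff_comm, symmDiff_self, symmDiff_bot, hsplit]

end SimpleGraph

theorem bn_le_of_connected_separator_general (G : SimpleGraph V) (X Y : Set V)
    (hXY : X ∪ Y = Set.univ) (hsep : ∀ x ∈ X \ Y, ∀ y ∈ Y \ X, ¬ G.Adj x y)
    (hconn : (G.induce (X ∩ Y)).Connected)
    (b₁ b₂ : ℕ) (hb₁ : (G.restrict X).bn ≤ b₁) (hb₂ : (G.restrict Y).bn ≤ b₂) :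
    G.bn ≤ b₁ + b₂ :=
  calc G.bn ≤ (G.restrict X).bn + (G.restrict Y).bn :=
        bnSet_le_add (SimpleGraph.edgeSet_mono (G.restrict_le X))
          (SimpleGraph.edgeSet_mono (G.restrict_le Y)) fun _ =>
          SimpleGraph.exists_isF2CycleIn_restrict_symmDiff
            (SimpleGraph.edgeSet_subset_restrict_union hXY hsep) hconn.preconnected
    _ ≤ b₁ + b₂ := add_le_add hb₁ hb₂

/-- if `(X, Y)` is a separation of `G` with `G[X ∩ Y]` connected,
`X \ Y` and `Y \ X` nonempty, `bn(G[X]) ≤ b₁` and `bn(G[Y]) ≤ b₂`, then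
`bn(G) ≤ b₁ + b₂`. -/
theorem bn_le_of_connected_separator (G : SimpleGraph V) (X Y : Set V)
    (hXY : X ∪ Y = Set.univ) (hsep : ∀ x ∈ X \ Y, ∀ y ∈ Y \ X, ¬ G.Adj x y)
    (hconn : (G.induce (X ∩ Y)).Connected)
    (hXne : (X \ Y).Nonempty) (hYne : (Y \ X).Nonempty)
    (b₁ b₂ : ℕ) (hb₁ : (G.restrict X).bn ≤ b₁) (hb₂ : (G.restrict Y).bn ≤ b₂) :
    G.bn ≤ b₁ + b₂ :=
  bn_le_of_connected_separator_general G X Y hXY hsep hconn b₁ b₂ hb₁ hb₂
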